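/- arXiv:2002.11964 — 4 statements merged into one kernel-verified Lean document; each statement's English description precedes it below -/
import Mathlib

section
/- If f : ℕ → ℤ is a linear recurrence sequence in ℚ (i.e., f takes integer values and satisfies a linear recurrence with rational coefficients whose lowest coefficient is nonzero), then f is a linear recurrence sequence in ℤ. In fact, the shortest recurrence for f in ℚ has all its coefficients in ℤ. -/
/-!
Put `F = ∑ f(n) Xⁿ` and let `Q(X) = 1 - ∑ aᵢ X^(k-i)` be the reversed characteristic polynomial
of the recurrence. The recurrence says exactly that `Q F = P` is a polynomial of degree `≤ k`.
If `P` and `Q` had a nonconstant common factor, cancelling it would give a shorter recurrence,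
so by minimality they are coprime, and Bézout gives `Q (U F + V) = 1` with `U, V ∈ ℚ[X]`:
the inverse of `Q` has bounded denominators. Write `μ Q = Q₁` with `Q₁ ∈ ℤ[X]` primitive and
`μ = Q₁(0)`. Then `Q₁ H = μ N` for an integral power series `H` with `H(0) = N`, and a Gauss lemma
for power series (reduce modulo a prime `p`; `(ℤ/p)⟦X⟧` is a domain) gives `μ N ∣ H(0) = N`,
so `μ = ±1` and `Q ∈ ℤ[X]`.
-/

open Polynomial
open scoped PowerSeries

theorem PowerSeries.C_dvd_iff_dvd_coeff {R : Type*} [CommSemiring R] (r : R) (φ : R⟦X⟧) :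
    C r ∣ φ ↔ ∀ n, r ∣ coeff n φ := by
  constructor
  · rintro ⟨ψ, rfl⟩ n
    simp
  · intro h
    choose c hc using h
    exact ⟨mk c, by ext n; simp [hc]⟩

namespace Polynomial.IsPrimitive

variable {R : Type*} [CommRing R] {Q : R[X]}

theorem C_dvd_of_C_dvd_coe_mul (hQ : Q.IsPrimitive) {p : R} (hp : Prime p) {H : R⟦X⟧}
    (h : PowerSeries.C p ∣ (Q : R⟦X⟧) * H) : PowerSeries.C p ∣ H := by
  have : (Ideal.span {p}).IsPrime := (Ideal.span_singleton_prime hp.ne_zero).mpr hp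
  set π := Ideal.Quotient.mk (Ideal.span {p})
  have hπ (r : R) : π r = 0 ↔ p ∣ r := by
    rw [Ideal.Quotient.eq_zero_iff_mem, Ideal.mem_span_singleton]
  have hQπ : Q.map π ≠ 0 := by
    intro h0
    refine hp.not_isUnit (hQ p ((C_dvd_iff_dvd_coeff p Q).mpr fun n => ?_))
    simpa [← hπ] using congrArg (coeff · n) h0
  have hQHπ : PowerSeries.map π (Q : R⟦X⟧) * PowerSeries.map π H = 0 := by
    ext n
    simpa [← map_mul, hπ] using (PowerSeries.C_dvd_iff_dvd_coeff p _).mp h n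
  have hHπ : PowerSeries.map π H = 0 := by
    refine (mul_eq_zero.mp hQHπ).resolve_left ?_
    rwa [← polynomial_map_coe, coe_eq_zero_iff]
  rw [PowerSeries.C_dvd_iff_dvd_coeff]
  intro n
  simpa [← hπ] using congrArg (PowerSeries.coeff n) hHπ

theorem C_dvd_of_coe_mul_eq_C [IsDomain R] [UniqueFactorizationMonoid R] (hQ : Q.IsPrimitive)
    (d : R) : ∀ {H : R⟦X⟧}, (Q : R⟦X⟧) * H = PowerSeries.C d → PowerSeries.C d ∣ H := by
  induction d using UniqueFactorizationMonoid.induction_on_prime with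
  | h₁ =>
    intro H h
    have hQ0 : (Q : R⟦X⟧) ≠ 0 := by simpa using hQ.ne_zero
    simp [(mul_eq_zero.mp (h.trans (map_zero _))).resolve_left hQ0]
  | h₂ u hu => exact fun _ => (hu.map PowerSeries.C).dvd
  | h₃ d p _ hp ih =>
    intro H h
    obtain ⟨H', rfl⟩ := hQ.C_dvd_of_C_dvd_coe_mul hp ⟨_, h.trans (map_mul _ p d)⟩
    have hp0 : PowerSeries.C p ≠ 0 := (map_ne_zero_iff _ PowerSeries.C_injective).mpr hp.ne_zero
    have hQH' : (Q : R⟦X⟧) * H' = PowerSeries.C d := by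
      apply mul_left_cancel₀ hp0
      rw [← map_mul, ← h]
      ring
    rw [map_mul]
    exact mul_dvd_mul_left _ (ih hQH')

end Polynomial.IsPrimitive

def IsRecurrence {R : Type*} [Semiring R] (g : ℕ → R) (k : ℕ) (a : ℕ → R) : Prop :=
  ∀ n ≥ 1, g (n + k) = ∑ i ∈ Finset.range k, a i * g (n + i)

section reverseCharPoly

variable {R : Type*} [CommRing R] (k : ℕ) (a : ℕ → R)

noncomputable def reverseCharPoly : R[X] :=
  1 - ∑ i ∈ Finset.range k, C (a i) * X ^ (k - i)

theorem coeff_reverseCharPoly_mul_mk (g : ℕ → R) (n : ℕ) :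
    PowerSeries.coeff (n + k) ((reverseCharPoly k a : R⟦X⟧) * PowerSeries.mk g)
      = g (n + k) - ∑ i ∈ Finset.range k, a i * g (n + i) := by
  rw [reverseCharPoly, ← coeToPowerSeries.ringHom_apply, map_sub, map_one, map_sum]
  simp only [coeToPowerSeries.ringHom_apply, coe_mul, coe_C, coe_pow, coe_X, one_mul, sub_mul,
    Finset.sum_mul, map_sub, map_sum, mul_assoc, PowerSeries.coeff_C_mul,
    PowerSeries.coeff_X_pow_mul', PowerSeries.coeff_mk]
  congr 1
  refine Finset.sum_congr rfl fun i hi => ?_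
  rw [Finset.mem_range] at hi
  rw [if_pos (by omega), show n + k - (k - i) = n + i by omega]

theorem isRecurrence_iff_coeff_reverseCharPoly_mul_mk (g : ℕ → R) :
    IsRecurrence g k a ↔
      ∀ n ≥ 1, PowerSeries.coeff (n + k) ((reverseCharPoly k a : R⟦X⟧) * PowerSeries.mk g) = 0 := by
  simp only [coeff_reverseCharPoly_mul_mk, sub_eq_zero, IsRecurrence]

theorem isRecurrence_iff_exists_coe_eq (g : ℕ → R) :
    IsRecurrence g k a ↔
      ∃ P : R[X], P.natDegree ≤ k ∧ (reverseCharPoly k a : R⟦X⟧) * PowerSeries.mk g = P := by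
  rw [isRecurrence_iff_coeff_reverseCharPoly_mul_mk]
  constructor
  · intro h
    set F := (reverseCharPoly k a : R⟦X⟧) * PowerSeries.mk g
    refine ⟨PowerSeries.trunc (k + 1) F, Nat.lt_succ_iff.mp (PowerSeries.natDegree_trunc_lt F k),
      ?_⟩
    ext m
    rw [coeff_coe, PowerSeries.coeff_trunc]
    split_ifs with hm
    · rfl
    · simpa [show m - k + k = m by omega] using h (m - k) (by omega)
  · rintro ⟨P, hP, hPF⟩ n hn
    rw [hPF, coeff_coe, coeff_eq_zero_of_natDegree_lt (by omega)]

theorem coeff_reverseCharPoly_sub {i : ℕ} (hi : i < k) :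
    (reverseCharPoly k a).coeff (k - i) = -a i := by
  rw [reverseCharPoly, coeff_sub, coeff_one, if_neg (by omega), finsetSum_coeff,
    Finset.sum_eq_single i]
  · simp
  · intro j hj hji
    rw [Finset.mem_range] at hj
    rw [coeff_C_mul_X_pow, if_neg (by omega)]
  · simp [hi]

theorem coeff_zero_reverseCharPoly : (reverseCharPoly k a).coeff 0 = 1 := by
  rw [reverseCharPoly, coeff_sub, coeff_one_zero, finsetSum_coeff, Finset.sum_eq_zero, sub_zero]
  intro i hi
  rw [Finset.mem_range] at hi
  rw [coeff_C_mul_X_pow, if_neg (by omega)]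

theorem natDegree_reverseCharPoly_le : (reverseCharPoly k a).natDegree ≤ k := by
  refine (natDegree_sub_le _ _).trans (max_le (by simp) ?_)
  refine natDegree_sum_le_of_forall_le _ _ fun i _ => ?_
  exact (natDegree_C_mul_X_pow_le _ _).trans (Nat.sub_le k i)

theorem natDegree_reverseCharPoly (ha : k = 0 ∨ a 0 ≠ 0) :
    (reverseCharPoly k a).natDegree = k := by
  refine (natDegree_reverseCharPoly_le k a).antisymm ?_
  rcases Nat.eq_zero_or_pos k with rfl | hk
  · exact Nat.zero_le _
  refine le_natDegree_of_ne_zero ?_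
  have hlead := coeff_reverseCharPoly_sub k a hk
  rw [Nat.sub_zero] at hlead
  rw [hlead]
  exact neg_ne_zero.mpr (ha.resolve_left hk.ne')

theorem reverseCharPoly_neg_coeff {Q : R[X]} (hQ0 : Q.coeff 0 = 1) (hQk : Q.natDegree ≤ k) :
    reverseCharPoly k (fun i => -Q.coeff (k - i)) = Q := by
  ext j
  rcases Nat.eq_zero_or_pos j with rfl | hj
  · rw [coeff_zero_reverseCharPoly, hQ0]
  rcases le_or_gt j k with hjk | hjk
  · rw [← Nat.sub_sub_self hjk, coeff_reverseCharPoly_sub k _ (by omega), neg_neg]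
  · rw [coeff_eq_zero_of_natDegree_lt ((natDegree_reverseCharPoly_le k _).trans_lt hjk),
      coeff_eq_zero_of_natDegree_lt (hQk.trans_lt hjk)]

end reverseCharPoly

theorem isCoprime_of_natDegree_minimal {K : Type*} [Field K] {F : K⟦X⟧} {P Q : K[X]}
    (hQ0 : Q.coeff 0 = 1) (hPQ : P.natDegree ≤ Q.natDegree) (hF : (Q : K⟦X⟧) * F = P)
    (hmin : ∀ P' Q' : K[X], Q'.coeff 0 = 1 → P'.natDegree ≤ Q'.natDegree →
      (Q' : K⟦X⟧) * F = P' → Q.natDegree ≤ Q'.natDegree) :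
    IsCoprime P Q := by
  have hQ : Q ≠ 0 := fun h => by simp [h] at hQ0
  refine isCoprime_of_dvd P Q (fun h => hQ h.2) fun z hz hz0 ⟨P₂, hP₂⟩ ⟨Q₂, hQ₂⟩ => ?_
  subst hP₂ hQ₂
  have hQ₂ : Q₂ ≠ 0 := right_ne_zero_of_mul hQ
  have hz_deg : 0 < z.natDegree := by
    by_contra! h
    exact hz (isUnit_iff_degree_eq_zero.mpr (by rw [degree_eq_natDegree hz0]; simp; omega))
  have hu : Q₂.coeff 0 ≠ 0 := by
    refine right_ne_zero_of_mul_eq_one (a := z.coeff 0) ?_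
    rw [← mul_coeff_zero, hQ0]
  have hv : (Q₂.coeff 0)⁻¹ ≠ 0 := inv_ne_zero hu
  have hF₂ : (Q₂ : K⟦X⟧) * F = P₂ := by
    refine mul_left_cancel₀ (fun h => hz0 (coe_eq_zero_iff.mp h)) ?_
    rw [← mul_assoc, ← coe_mul, hF, coe_mul]
  have hP₂ : P₂.natDegree ≤ Q₂.natDegree := by
    rcases eq_or_ne P₂ 0 with rfl | hP₂
    · simp
    rw [natDegree_mul hz0 hQ₂, natDegree_mul hz0 hP₂] at hPQ
    omega
  have hle := hmin (C (Q₂.coeff 0)⁻¹ * P₂) (C (Q₂.coeff 0)⁻¹ * Q₂)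
    (by rw [coeff_C_mul, inv_mul_cancel₀ hu])
    (by rw [natDegree_C_mul hv, natDegree_C_mul hv]; exact hP₂)
    (by rw [coe_mul, coe_mul, mul_assoc, hF₂])
  rw [natDegree_mul hz0 hQ₂, natDegree_C_mul hv] at hle
  omega

section FractionRing

variable {R K : Type*} [CommRing R] [IsDomain R] [Field K] [Algebra R K] [IsFractionRing R K]

theorem exists_map_eq_C_mul_mul_add (U V : K[X]) (F : R⟦X⟧) :
    ∃ N : R, N ≠ 0 ∧ ∃ H : R⟦X⟧, PowerSeries.map (algebraMap R K) H =
      PowerSeries.C (algebraMap R K N) * (U * PowerSeries.map (algebraMap R K) F + V) := by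
  obtain ⟨b, hb, hU⟩ := IsLocalization.integerNormalization_spec (nonZeroDivisors R) U
  obtain ⟨c, hc, hV⟩ := IsLocalization.integerNormalization_spec (nonZeroDivisors R) V
  refine ⟨b * c, mul_ne_zero (nonZeroDivisors.ne_zero hb) (nonZeroDivisors.ne_zero hc),
    PowerSeries.C c * IsLocalization.integerNormalization (nonZeroDivisors R) U * F +
      PowerSeries.C b * IsLocalization.integerNormalization (nonZeroDivisors R) V, ?_⟩
  simp only [map_add, map_mul, PowerSeries.map_C, ← polynomial_map_coe, hU, hV,
    Algebra.smul_def, coe_mul, Polynomial.algebraMap_apply, coe_C]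
  ring

theorem exists_map_eq_of_coe_mul_eq_one [UniqueFactorizationMonoid R] [NormalizedGCDMonoid R]
    {Q : K[X]} (hQ0 : Q.coeff 0 = 1) {G : K⟦X⟧} (hQG : (Q : K⟦X⟧) * G = 1) {N : R} (hN : N ≠ 0)
    {H : R⟦X⟧} (hH : PowerSeries.map (algebraMap R K) H = PowerSeries.C (algebraMap R K N) * G) :
    ∃ Q₁ : R[X], Q₁.map (algebraMap R K) = Q := by
  obtain ⟨b, hb, hQb⟩ := IsLocalization.integerNormalization_spec (nonZeroDivisors R) Q
  set φ := algebraMap R K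
  have hφ : Function.Injective φ := IsFractionRing.injective R K
  set Q₀ := IsLocalization.integerNormalization (nonZeroDivisors R) Q
  set Q₁ := Q₀.primPart
  set μ := Q₁.coeff 0
  set c := Q₀.content
  have hQ₀ : Q₀ = C c * Q₁ := Q₀.eq_C_content_mul_primPart
  have hbμ : c * μ = b := hφ <| by
    have h0 := congrArg (coeff · 0) hQb
    simp only [coeff_map, Algebra.smul_def, Polynomial.algebraMap_apply, coeff_C_mul, hQ0,
      mul_one] at h0
    rwa [hQ₀, coeff_C_mul] at h0
  have hc0 : φ c ≠ 0 := by
    rw [map_ne_zero_iff _ hφ]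
    rintro h
    exact nonZeroDivisors.ne_zero hb (by simpa [h] using hbμ.symm)
  have hQ₁ : Q₁.map φ = C (φ μ) * Q := by
    refine mul_left_cancel₀ (C_ne_zero.mpr hc0) ?_
    calc C (φ c) * Q₁.map φ = Q₀.map φ := by rw [hQ₀, Polynomial.map_mul, map_C]
      _ = C (φ b) * Q := by rw [hQb, Algebra.smul_def, Polynomial.algebraMap_apply]
      _ = C (φ c) * (C (φ μ) * Q) := by rw [← hbμ, map_mul, C_mul, mul_assoc]
  have hQ₁H : (Q₁ : R⟦X⟧) * H = PowerSeries.C (μ * N) := by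
    refine PowerSeries.map_injective φ hφ ?_
    rw [map_mul, ← polynomial_map_coe, hQ₁, hH, PowerSeries.map_C, coe_mul, coe_C, map_mul, map_mul]
    linear_combination (PowerSeries.C (φ μ) * PowerSeries.C (φ N)) * hQG
  have hG0 : PowerSeries.constantCoeff G = 1 := by
    simpa [hQ0] using congrArg PowerSeries.constantCoeff hQG
  have hH0 : PowerSeries.coeff 0 H = N := hφ <| by
    simpa [hG0] using congrArg (PowerSeries.coeff 0) hH
  have hμN : μ * N ∣ N := by
    simpa [hH0] using (PowerSeries.C_dvd_iff_dvd_coeff _ _).mp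
      ((isPrimitive_primPart Q₀).C_dvd_of_coe_mul_eq_C _ hQ₁H) 0
  have hμ : IsUnit μ := isUnit_of_dvd_one ((mul_dvd_mul_iff_right hN).mp (by rwa [one_mul]))
  refine ⟨C (↑hμ.unit⁻¹ : R) * Q₁, ?_⟩
  rw [Polynomial.map_mul, hQ₁, map_C, ← mul_assoc, ← C_mul, ← map_mul, hμ.val_inv_mul, map_one,
    C_1, one_mul]

theorem IsRecurrence.exists_algebraMap_eq_of_minimal [UniqueFactorizationMonoid R]
    [NormalizedGCDMonoid R] {f : ℕ → R} {k : ℕ} {a : ℕ → K} (ha : k = 0 ∨ a 0 ≠ 0)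
    (hrec : IsRecurrence (fun n => algebraMap R K (f n)) k a)
    (hmin : ∀ (k' : ℕ) (a' : ℕ → K), (k' = 0 ∨ a' 0 ≠ 0) →
      IsRecurrence (fun n => algebraMap R K (f n)) k' a' → k ≤ k') :
    ∃ b : ℕ → R, ∀ i < k, algebraMap R K (b i) = a i := by
  set F := PowerSeries.map (algebraMap R K) (PowerSeries.mk f)
  have hF : F = PowerSeries.mk fun n => algebraMap R K (f n) := by ext; simp [F]
  set Q := reverseCharPoly k a
  have hQ0 : Q.coeff 0 = 1 := coeff_zero_reverseCharPoly k a
  have hQk : Q.natDegree = k := natDegree_reverseCharPoly k a ha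
  obtain ⟨P, hPk, hPQ⟩ := (isRecurrence_iff_exists_coe_eq k a _).mp hrec
  rw [← hF] at hPQ
  have hcop : IsCoprime P Q := by
    refine isCoprime_of_natDegree_minimal hQ0 (hQk ▸ hPk) hPQ fun P' Q' hQ'0 hP'Q' hQ'F => ?_
    have hQ' : Q' ≠ 0 := fun h => by simp [h] at hQ'0
    rw [hQk]
    refine hmin _ (fun i => -Q'.coeff (Q'.natDegree - i)) (Or.inr ?_) ?_
    · simpa using hQ'
    · rw [isRecurrence_iff_exists_coe_eq, reverseCharPoly_neg_coeff _ hQ'0 le_rfl, ← hF]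
      exact ⟨P', hP'Q', hQ'F⟩
  obtain ⟨U, V, hUV⟩ := hcop
  have hQG : (Q : K⟦X⟧) * (U * F + V) = 1 := by
    rw [mul_add, mul_left_comm, hPQ, ← coe_mul, ← coe_mul, ← coe_add, mul_comm Q V, hUV, coe_one]
  obtain ⟨N, hN, H, hH⟩ := exists_map_eq_C_mul_mul_add U V (PowerSeries.mk f)
  obtain ⟨Q₁, hQ₁⟩ := exists_map_eq_of_coe_mul_eq_one hQ0 hQG hN hH
  refine ⟨fun i => -Q₁.coeff (k - i), fun i hi => ?_⟩
  rw [map_neg, ← coeff_map, hQ₁, coeff_reverseCharPoly_sub k a hi, neg_neg]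

end FractionRing

/-- Fatou's lemma: If `f : ℕ → ℤ` satisfies a linear recurrence with rational
coefficients (with nonzero lowest coefficient, and where `k` is the minimal possible order of
such a rational recurrence), then the coefficients of this shortest rational recurrence are
all integers; in particular `f` is a linear recurrence sequence in ℤ. -/
theorem stmt4 (f : ℕ → ℤ) (k : ℕ) (a : ℕ → ℚ) (ha : k = 0 ∨ a 0 ≠ 0)
    (hrec : ∀ n ≥ 1, (f (n + k) : ℚ) = ∑ i ∈ Finset.range k, a i * (f (n + i) : ℚ))
    (hmin : ∀ (k' : ℕ) (a' : ℕ → ℚ), (k' = 0 ∨ a' 0 ≠ 0) →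
      (∀ n ≥ 1, (f (n + k') : ℚ) = ∑ i ∈ Finset.range k', a' i * (f (n + i) : ℚ)) →
      k ≤ k') :
    (∀ i < k, ∃ b : ℤ, a i = (b : ℚ)) ∧
    ∃ (l : ℕ) (b : ℕ → ℤ), (l = 0 ∨ b 0 ≠ 0) ∧
      ∀ n ≥ 1, f (n + l) = ∑ i ∈ Finset.range l, b i * f (n + i) := by
  obtain ⟨b, hb⟩ := IsRecurrence.exists_algebraMap_eq_of_minimal (f := f) ha hrec hmin
  simp only [algebraMap_int_eq, eq_intCast] at hb
  refine ⟨fun i hi => ⟨b i, (hb i hi).symm⟩, k, b, ?_, fun n hn => ?_⟩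
  · rcases Nat.eq_zero_or_pos k with hk | hk
    · exact Or.inl hk
    · exact Or.inr fun h0 => ha.resolve_left hk.ne' (by rw [← hb 0 hk, h0, Int.cast_zero])
  · have h := hrec n hn
    rw [Finset.sum_congr rfl fun i hi => by rw [← hb i (Finset.mem_range.mp hi)]] at h
    exact_mod_cast h
end

section
/- Let S(x) be a power sum such that the function n ↦ S(n) takes values in ℤ and is a linear recurrence sequence (in ℤ). If each root α of S(x) has modulus |α| ≤ 1, then each root of S(x) is a root of unity. -/
/-!
A power sum determines its roots and coefficient polynomials from its values for large `n`:
the operator `u ↦ (n ↦ u (n + 1) - a * u n)`, applied `deg + 1` times, kills the component with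
root `a` and keeps every other component nonzero. Applied to `u (n + l) - ∑ b j * u (n + j)`, this
shows that every root satisfies the characteristic equation of the integer recurrence, so it is an
algebraic integer. Applied to the image of the power sum under an embedding `ψ` of a number field
containing all the data, which fixes the integer values, it shows that `ψ` maps roots to roots.
Hence all conjugates of a root lie in the closed unit disk, and Kronecker's theorem applies.
-/

open Polynomial Finset Filter Function

theorem Polynomial.eq_zero_of_eventually_eval_natCast_eq_zero {R : Type*} [CommRing R]
    [IsDomain R] [CharZero R] {p : R[X]} (h : ∀ᶠ n : ℕ in atTop, p.eval (n : R) = 0) : p = 0 := by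
  obtain ⟨N, hN⟩ := eventually_atTop.1 h
  refine eq_zero_of_infinite_isRoot p
    ((Set.Ici_infinite N).image Nat.cast_injective.injOn |>.mono ?_)
  rintro _ ⟨n, hn, rfl⟩
  exact hN n hn

theorem isIntegral_of_pow_eq_sum {R A : Type*} [CommRing R] [Ring A] [Algebra R A] {x : A}
    {l : ℕ} {b : ℕ → R} (h : x ^ l = ∑ j ∈ range l, algebraMap R A (b j) * x ^ j) :
    IsIntegral R x := by
  refine ⟨X ^ l - ∑ j ∈ range l, C (b j) * X ^ j, monic_X_pow_sub ?_, ?_⟩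
  · rw [← Fin.sum_univ_eq_sum_range (fun j ↦ C (b j) * X ^ j)]
    exact degree_sum_fin_lt _
  · simp [eval₂_finsetSum, h]

theorem exists_numberField_lift {ι : Type*} [Finite ι] (p : ι → ℂ[X]) (α : ι → ℂ)
    (hp : ∀ i n, IsAlgebraic ℚ ((p i).coeff n)) (hα : ∀ i, IsAlgebraic ℚ (α i)) :
    ∃ (K : IntermediateField ℚ ℂ) (_ : NumberField K) (pK : ι → K[X]) (αK : ι → K),
      (∀ i, (pK i).map (algebraMap K ℂ) = p i) ∧ ∀ i, algebraMap K ℂ (αK i) = α i := by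
  let S : Set ℂ := Set.range α ∪ ⋃ i, ((p i).coeffs : Set ℂ)
  have : Finite S := by
    refine (Set.finite_range α).union (Set.finite_iUnion fun i ↦ ?_) |>.to_subtype
    exact ((p i).coeffs : Set ℂ).toFinite
  have hS : ∀ x ∈ S, IsIntegral ℚ x := by
    rintro x (⟨i, rfl⟩ | hx)
    · exact (hα i).isIntegral
    · obtain ⟨i, hi⟩ := Set.mem_iUnion.1 hx
      obtain ⟨n, -, rfl⟩ := mem_coeffs_iff.1 hi
      exact (hp i n).isIntegral
  let K := IntermediateField.adjoin ℚ S
  have : FiniteDimensional ℚ K := IntermediateField.finiteDimensional_adjoin hS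
  have hcoeff (i : ι) (n : ℕ) : (p i).coeff n ∈ Set.range (algebraMap K ℂ) := by
    by_cases h0 : (p i).coeff n = 0
    · exact ⟨0, by rw [h0, map_zero]⟩
    · exact ⟨⟨_, IntermediateField.subset_adjoin ℚ S
        (Or.inr (Set.mem_iUnion.2 ⟨i, coeff_mem_coeffs h0⟩))⟩, rfl⟩
  choose pK hpK using fun i ↦ (lifts_iff_coeff_lifts (p i)).2 (hcoeff i)
  exact ⟨K, ⟨⟩, pK, fun i ↦ ⟨α i, IntermediateField.subset_adjoin ℚ S (Or.inl ⟨i, rfl⟩)⟩,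
    hpK, fun i ↦ rfl⟩

namespace PowerSum

section CommRing

variable {R ι : Type*} [CommRing R]

def eval (s : Finset ι) (q : ι → R[X]) (β : ι → R) (n : ℕ) : R :=
  ∑ i ∈ s, (q i).eval (n : R) * β i ^ n

/-- The coefficient polynomial of `u (n + 1) - a * u n` when `u n = r(n) * ρ ^ n`. -/
noncomputable def shiftSub (ρ a : R) (r : R[X]) : R[X] := C ρ * taylor 1 r - C a * r

lemma eval_shiftSub (ρ a : R) (r : R[X]) (x : R) :
    (shiftSub ρ a r).eval x = ρ * r.eval (x + 1) - a * r.eval x := by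
  simp [shiftSub, taylor_eval]

lemma coeff_shiftSub_natDegree (ρ a : R) (r : R[X]) :
    (shiftSub ρ a r).coeff r.natDegree = (ρ - a) * r.leadingCoeff := by
  simp [shiftSub, coeff_taylor_natDegree, sub_mul]

lemma eval_iterate_shiftSub_self (a : R) (r : R[X]) (m : ℕ) (x : R) :
    ((shiftSub a a)^[m] r).eval x = a ^ m * (fwdDiff 1)^[m] (fun y ↦ r.eval y) x := by
  induction m generalizing x with
  | zero => simp
  | succ m ih =>
    rw [iterate_succ_apply', eval_shiftSub, ih, ih, iterate_succ_apply', fwdDiff]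
    ring

lemma eval_shiftSub_succ (s : Finset ι) (q : ι → R[X]) (β : ι → R) (a : R) (n : ℕ) :
    eval s (fun i ↦ shiftSub (β i) a (q i)) β n = eval s q β (n + 1) - a * eval s q β n := by
  simp only [eval, eval_shiftSub, mul_sum, ← sum_sub_distrib]
  refine sum_congr rfl fun i _ ↦ ?_
  push_cast
  ring

lemma map_eval {S : Type*} [CommRing S] (φ : R →+* S) (s : Finset ι) (q : ι → R[X]) (β : ι → R)
    (n : ℕ) : φ (eval s q β n) = eval s (fun i ↦ (q i).map φ) (φ ∘ β) n := by
  simp [eval, eval_natCast_map]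

end CommRing

section Domain

variable {R ι : Type*} [CommRing R] [IsDomain R]

lemma shiftSub_ne_zero {ρ a : R} (h : ρ ≠ a) {r : R[X]} (hr : r ≠ 0) : shiftSub ρ a r ≠ 0 := by
  intro h0
  have := coeff_shiftSub_natDegree ρ a r
  simp [h0, sub_eq_zero, h, hr] at this

lemma iterate_shiftSub_ne_zero {ρ a : R} (h : ρ ≠ a) {r : R[X]} (hr : r ≠ 0) (m : ℕ) :
    (shiftSub ρ a)^[m] r ≠ 0 := by
  induction m with
  | zero => exact hr
  | succ m ih => rw [iterate_succ_apply']; exact shiftSub_ne_zero h ih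

variable [CharZero R]

lemma iterate_shiftSub_self_natDegree_succ (a : R) (r : R[X]) :
    (shiftSub a a)^[r.natDegree + 1] r = 0 :=
  Polynomial.funext fun x ↦ by
    rw [eval_iterate_shiftSub_self, fwdDiff_iter_degree_add_one_eq_zero]
    simp

theorem eq_zero_of_eventually_eval_id_eq_zero {s : Finset R} (hs : (0 : R) ∉ s) {q : R → R[X]}
    (h : ∀ᶠ n in atTop, eval s q id n = 0) : ∀ ρ ∈ s, q ρ = 0 := by
  classical
  induction s using Finset.induction_on generalizing q with
  | empty => simp
  | @insert a t hat ih =>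
    have ha : a ≠ 0 := fun h ↦ hs (h ▸ mem_insert_self a t)
    have hiter : ∀ m, ∀ᶠ n in atTop,
        eval (insert a t) (fun ρ ↦ (shiftSub ρ a)^[m] (q ρ)) id n = 0 := by
      intro m
      induction m with
      | zero => exact h
      | succ m ihm =>
        filter_upwards [ihm, (tendsto_add_atTop_nat 1).eventually ihm] with n h0 h1
        simp only [iterate_succ_apply']
        exact (eval_shiftSub_succ (insert a t) _ id a n).trans (by rw [h1, h0, mul_zero, sub_zero])
    set m := (q a).natDegree + 1
    have ht : ∀ᶠ n in atTop, eval t (fun ρ ↦ (shiftSub ρ a)^[m] (q ρ)) id n = 0 := by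
      filter_upwards [hiter m] with n hn
      simp only [eval, sum_insert hat, id] at hn
      rwa [iterate_shiftSub_self_natDegree_succ, eval_zero, zero_mul, zero_add] at hn
    have hqt : ∀ ρ ∈ t, q ρ = 0 := fun ρ hρ ↦ by
      by_contra hne
      exact iterate_shiftSub_ne_zero (ne_of_mem_of_not_mem hρ hat) hne m
        (ih (fun h0 ↦ hs (mem_insert_of_mem h0)) ht ρ hρ)
    have hqa : q a = 0 := by
      refine eq_zero_of_eventually_eval_natCast_eq_zero ?_
      filter_upwards [h] with n hn
      simp only [eval, sum_insert hat, id] at hn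
      rw [sum_eq_zero fun ρ hρ ↦ by rw [hqt ρ hρ, eval_zero, zero_mul], add_zero] at hn
      exact (mul_eq_zero.1 hn).resolve_right (pow_ne_zero n ha)
    exact forall_mem_insert .. |>.2 ⟨hqa, hqt⟩

theorem sum_fiber_eq_zero_of_eventually_eval_eq_zero [DecidableEq R] {s : Finset ι} {β : ι → R}
    (hβ : ∀ i ∈ s, β i ≠ 0) {q : ι → R[X]} (h : ∀ᶠ n in atTop, eval s q β n = 0) (ρ : R) :
    ∑ i ∈ s with β i = ρ, q i = 0 := by
  by_cases hρ : ρ ∈ s.image β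
  · refine eq_zero_of_eventually_eval_id_eq_zero (q := fun ρ ↦ ∑ i ∈ s with β i = ρ, q i)
      (by simpa using hβ) ?_ ρ hρ
    filter_upwards [h] with n hn
    rw [← hn, eval, eval, ← sum_fiberwise_of_maps_to fun i hi ↦ mem_image_of_mem β hi]
    refine sum_congr rfl fun ρ _ ↦ ?_
    rw [eval_finsetSum, sum_mul]
    exact sum_congr rfl fun i hi ↦ by rw [(mem_filter.1 hi).2]; rfl
  · refine sum_eq_zero fun i hi ↦ absurd ?_ hρ
    rw [← (mem_filter.1 hi).2]
    exact mem_image_of_mem β (mem_filter.1 hi).1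

theorem eq_zero_of_eventually_eval_eq_zero [Fintype ι] {β : ι → R} (hβ : Injective β)
    (hβ0 : ∀ i, β i ≠ 0) {q : ι → R[X]} (h : ∀ᶠ n in atTop, eval univ q β n = 0) (i : ι) :
    q i = 0 := by
  classical
  simpa [hβ.eq_iff, sum_filter] using
    sum_fiber_eq_zero_of_eventually_eval_eq_zero (fun i _ ↦ hβ0 i) h (β i)

theorem mem_range_of_eventually_eval_eq {κ : Type*} [Fintype ι] [Fintype κ] {β : ι → R}
    {γ : κ → R} (hβ0 : ∀ i, β i ≠ 0) (hγ0 : ∀ j, γ j ≠ 0) (hγ : Injective γ) {q : ι → R[X]}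
    {r : κ → R[X]} (hr : ∀ j, r j ≠ 0) (h : ∀ᶠ n in atTop, eval univ q β n = eval univ r γ n)
    (j : κ) : γ j ∈ Set.range β := by
  classical
  by_contra hj
  simp only [Set.mem_range, not_exists] at hj
  have hsum : ∀ᶠ n in atTop, eval univ (Sum.elim q (-r)) (Sum.elim β γ) n = 0 := by
    filter_upwards [h] with n hn
    simp only [eval, Fintype.sum_sum_type, Sum.elim_inl, Sum.elim_inr, Pi.neg_apply, eval_neg,
      neg_mul, sum_neg_distrib]
    exact add_neg_eq_zero.2 hn
  have := sum_fiber_eq_zero_of_eventually_eval_eq_zero (by simp [Sum.forall, hβ0, hγ0]) hsum (γ j)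
  simp [sum_filter, Fintype.sum_sum_type, hγ.eq_iff, hj, hr] at this

theorem pow_eq_sum_of_eventually_recurrence [Fintype ι] {α : ι → R} (hα : Injective α)
    (hα0 : ∀ i, α i ≠ 0) {p : ι → R[X]} (hp : ∀ i, p i ≠ 0) {l : ℕ} {b : ℕ → R}
    (h : ∀ᶠ n in atTop, eval univ p α (n + l) = ∑ j ∈ range l, b j * eval univ p α (n + j))
    (i : ι) : α i ^ l = ∑ j ∈ range l, b j * α i ^ j := by
  set q : ι → R[X] := fun i ↦
    C (α i ^ l) * taylor (l : R) (p i) - ∑ j ∈ range l, C (b j * α i ^ j) * taylor (j : R) (p i)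
  have hq (n : ℕ) : eval univ q α n =
      eval univ p α (n + l) - ∑ j ∈ range l, b j * eval univ p α (n + j) := by
    simp only [eval, mul_sum]
    rw [sum_comm, ← sum_sub_distrib]
    refine sum_congr rfl fun i _ ↦ ?_
    simp only [q, eval_sub, eval_mul, eval_C, eval_finsetSum, taylor_eval, sub_mul, sum_mul]
    push_cast
    congr 1
    · ring
    · exact sum_congr rfl fun j _ ↦ by ring
  have hq0 : q i = 0 := eq_zero_of_eventually_eval_eq_zero hα hα0
    (by filter_upwards [h] with n hn; rw [hq, hn, sub_self]) i
  have hlead := congrArg (coeff · (p i).natDegree) hq0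
  simp only [q, coeff_sub, coeff_C_mul, finsetSum_coeff, coeff_taylor_natDegree, ← sum_mul,
    ← sub_mul, coeff_zero, mul_eq_zero, leadingCoeff_eq_zero, hp i, or_false] at hlead
  exact sub_eq_zero.1 hlead

theorem map_mem_range_of_eventually_eval_eq_intCast {K : Type*} [Field K] [Fintype ι]
    {β : ι → K} (hβ : Injective β) (hβ0 : ∀ i, β i ≠ 0) {q : ι → K[X]} (hq : ∀ i, q i ≠ 0)
    {z : ℕ → ℤ} (h : ∀ᶠ n in atTop, eval univ q β n = z n) (φ ψ : K →+* R) (i : ι) :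
    ψ (β i) ∈ Set.range (φ ∘ β) := by
  refine mem_range_of_eventually_eval_eq (q := fun i ↦ (q i).map φ) (r := fun i ↦ (q i).map ψ)
    (by simpa using hβ0) (by simpa using hβ0) (ψ.injective.comp hβ)
    (fun i ↦ (Polynomial.map_ne_zero_iff ψ.injective).2 (hq i)) ?_ i
  filter_upwards [h] with n hn
  rw [← map_eval, ← map_eval, hn, map_intCast, map_intCast]

end Domain

theorem exists_pow_eq_one_of_eventually_eval_eq_intCast {ι : Type*} [Fintype ι]
    {p : ι → ℂ[X]} {α : ι → ℂ} (hp : ∀ i, p i ≠ 0) (hpalg : ∀ i n, IsAlgebraic ℚ ((p i).coeff n))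
    (hα : Injective α) (hα0 : ∀ i, α i ≠ 0) (hαint : ∀ i, IsIntegral ℤ (α i))
    (hαnorm : ∀ i, ‖α i‖ ≤ 1) {z : ℕ → ℤ} (h : ∀ᶠ n in atTop, eval univ p α n = z n) (i : ι) :
    ∃ m, 0 < m ∧ α i ^ m = 1 := by
  obtain ⟨K, _, pK, αK, hpK, hαK⟩ :=
    exists_numberField_lift p α hpalg fun i ↦ ((hαint i).tower_top (A := ℚ)).isAlgebraic
  have hαK' : algebraMap K ℂ ∘ αK = α := funext hαK
  have hαKinj : Injective αK := fun i j hij ↦ hα (by rw [← hαK, ← hαK, hij])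
  have hαK0 (i : ι) : αK i ≠ 0 := fun h0 ↦ hα0 i (by rw [← hαK, h0, map_zero])
  have hpK0 (i : ι) : pK i ≠ 0 := fun h0 ↦ hp i (by rw [← hpK, h0, Polynomial.map_zero])
  have hK : ∀ᶠ n in atTop, eval univ pK αK n = z n := by
    filter_upwards [h] with n hn
    apply (algebraMap K ℂ).injective
    rw [map_eval, map_intCast, ← hn, hαK', funext hpK]
  have hconj (ψ : K →+* ℂ) : ‖ψ (αK i)‖ ≤ 1 := by
    obtain ⟨j, hj⟩ :=
      map_mem_range_of_eventually_eval_eq_intCast hαKinj hαK0 hpK0 hK (algebraMap K ℂ) ψ i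
    rw [← hj, hαK']
    exact hαnorm j
  obtain ⟨m, hm, hαm⟩ := NumberField.Embeddings.pow_eq_one_of_norm_le_one K ℂ (hαK0 i)
    ((isIntegral_algebraMap_iff (algebraMap K ℂ).injective).1 (hαK i ▸ hαint i)) hconj
  exact ⟨m, hm, by rw [← hαK, ← map_pow, hαm, map_one]⟩

end PowerSum

theorem stmt8_general (k : ℕ) (p : Fin k → Polynomial ℂ) (α : Fin k → ℂ)
    (hp0 : ∀ i, p i ≠ 0) (hpalg : ∀ i n, IsAlgebraic ℚ ((p i).coeff n))
    (hα0 : ∀ i, α i ≠ 0)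
    (hαinj : Function.Injective α)
    (g : ℕ → ℤ)
    (hg : ∀ n ≥ 1, (g n : ℂ) = ∑ i, (p i).eval (n : ℂ) * α i ^ n)
    (hlin : ∃ (l : ℕ) (b : ℕ → ℤ), (l = 0 ∨ b 0 ≠ 0) ∧
      ∀ n ≥ 1, g (n + l) = ∑ i ∈ Finset.range l, b i * g (n + i))
    (hmod : ∀ i, ‖α i‖ ≤ 1) :
    ∀ i, ∃ m : ℕ, 0 < m ∧ α i ^ m = 1 := by
  obtain ⟨l, b, -, hrec⟩ := hlin
  have hval (n : ℕ) (hn : 1 ≤ n) : PowerSum.eval univ p α n = g n := (hg n hn).symm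
  have hrecℂ : ∀ᶠ n in atTop, PowerSum.eval univ p α (n + l) =
      ∑ j ∈ range l, (b j : ℂ) * PowerSum.eval univ p α (n + j) := by
    filter_upwards [eventually_ge_atTop 1] with n hn
    rw [hval _ (by omega), hrec n hn]
    push_cast
    exact sum_congr rfl fun j _ ↦ by rw [hval _ (by omega)]
  have hint (i : Fin k) : IsIntegral ℤ (α i) := isIntegral_of_pow_eq_sum
    (PowerSum.pow_eq_sum_of_eventually_recurrence hαinj hα0 hp0 hrecℂ i)
  exact PowerSum.exists_pow_eq_one_of_eventually_eval_eq_intCast hp0 hpalg hαinj hα0 hint hmod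
    (eventually_atTop.2 ⟨1, hval⟩)

/-- Let `S(x) = ∑_{i=1}^k p_i(x) α_i^x` be a power sum such that `n ↦ S(n)`
takes integer values (given by `g : ℕ → ℤ`) and is a linear recurrence sequence in ℤ.
If each root `α_i` has modulus `|α_i| ≤ 1`, then each root of `S(x)` is a root of unity. -/
theorem stmt8 (k : ℕ) (p : Fin k → Polynomial ℂ) (α : Fin k → ℂ)
    (hp0 : ∀ i, p i ≠ 0) (hpalg : ∀ i n, IsAlgebraic ℚ ((p i).coeff n))
    (hα0 : ∀ i, α i ≠ 0) (hαalg : ∀ i, IsAlgebraic ℚ (α i))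
    (hαinj : Function.Injective α)
    (g : ℕ → ℤ)
    (hg : ∀ n ≥ 1, (g n : ℂ) = ∑ i, (p i).eval (n : ℂ) * α i ^ n)
    (hlin : ∃ (l : ℕ) (b : ℕ → ℤ), (l = 0 ∨ b 0 ≠ 0) ∧
      ∀ n ≥ 1, g (n + l) = ∑ i ∈ Finset.range l, b i * g (n + i))
    (hmod : ∀ i, ‖α i‖ ≤ 1) :
    ∀ i, ∃ m : ℕ, 0 < m ∧ α i ^ m = 1 :=
  stmt8_general k p α hp0 hpalg hα0 hαinj g hg hlin hmod
end

section
/- (Kronecker's theorem) If p ∈ ℤ[x] is a monic polynomial with p(0) ≠ 0 and every complex root α of p(x) has modulus |α| ≤ 1, then every root of p(x) is a root of unity. -/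
open Polynomial

lemma stmt9_multiset_prod_le_one (s : Multiset ℝ)
    (h : ∀ x ∈ s, 0 ≤ x ∧ x ≤ 1) : s.prod ≤ 1 := by
  induction s using Multiset.induction_on with
  | empty => simp
  | cons a t ih =>
    rw [Multiset.prod_cons]
    have ha := h a (Multiset.mem_cons_self a t)
    have ht := ih (fun x hx => h x (Multiset.mem_cons_of_mem hx))
    have htn : 0 ≤ t.prod := Multiset.prod_nonneg fun x hx => (h x (Multiset.mem_cons_of_mem hx)).1
    nlinarith

/-- All complex roots of such a polynomial have modulus exactly 1. -/
lemma stmt9_abs_eq_one (p : Polynomial ℤ) (hmonic : p.Monic) (h0 : p.eval 0 ≠ 0)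
    (hroots : ∀ z : ℂ, Polynomial.aeval z p = 0 → ‖z‖ ≤ 1) :
    ∀ z : ℂ, Polynomial.aeval z p = 0 → ‖z‖ = 1 := by
  intro z hz
  set q : Polynomial ℂ := p.map (algebraMap ℤ ℂ) with hq
  have hqmonic : q.Monic := hmonic.map _
  have hqne : q ≠ 0 := hqmonic.ne_zero
  have hsplits : q.Splits := IsAlgClosed.splits q
  have hroot_iff : ∀ w : ℂ, w ∈ q.roots → Polynomial.aeval w p = 0 := by
    intro w hw
    have := (mem_roots hqne).1 hw
    rwa [IsRoot.def, eval_map, ← aeval_def] at this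
  -- product of roots
  have hprod : q.coeff 0 = (-1) ^ q.natDegree * q.roots.prod :=
    hsplits.coeff_zero_eq_prod_roots_of_monic hqmonic
  have hc0 : q.coeff 0 = ((p.coeff 0 : ℤ) : ℂ) := by simp [hq]
  have hc0ne : (1 : ℝ) ≤ ‖q.coeff 0‖ := by
    rw [hc0]
    have hne : p.coeff 0 ≠ 0 := by
      simpa [coeff_zero_eq_eval_zero] using h0
    have h1 : (1 : ℤ) ≤ |p.coeff 0| := Int.one_le_abs hne
    calc (1:ℝ) ≤ |(p.coeff 0 : ℝ)| := by exact_mod_cast h1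
    _ = ‖((p.coeff 0 : ℤ) : ℂ)‖ := by
        rw [Complex.norm_intCast]
  have htotal : (1 : ℝ) ≤ (q.roots.map norm).prod := by
    rw [show (q.roots.map norm).prod = ‖q.roots.prod‖ from
      (map_multiset_prod (normHom : ℂ →*₀ ℝ) q.roots).symm]
    calc (1:ℝ) ≤ ‖q.coeff 0‖ := hc0ne
    _ = ‖q.roots.prod‖ := by rw [hprod]; simp
  have hzq : z ∈ q.roots := by
    rw [mem_roots hqne]
    rw [IsRoot.def, eval_map, ← aeval_def]
    exact hz
  have hcons : q.roots = z ::ₘ q.roots.erase z := (Multiset.cons_erase hzq).symm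
  have hrest_le : (Multiset.map norm (q.roots.erase z)).prod ≤ 1 := by
    apply stmt9_multiset_prod_le_one
    intro x hx
    obtain ⟨w, hw, rfl⟩ := Multiset.mem_map.1 hx
    exact ⟨norm_nonneg w, hroots w (hroot_iff w (Multiset.mem_of_mem_erase hw))⟩
  have hrest_nonneg : 0 ≤ (Multiset.map norm (q.roots.erase z)).prod := by
    apply Multiset.prod_nonneg
    intro x hx
    obtain ⟨w, hw, rfl⟩ := Multiset.mem_map.1 hx
    exact norm_nonneg w
  rw [hcons, Multiset.map_cons, Multiset.prod_cons] at htotal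
  have hle := hroots z hz
  nlinarith [norm_nonneg z]

/-- Kronecker's theorem: If `p ∈ ℤ[x]` is monic, `p(0) ≠ 0`, and every complex
root of `p` has modulus at most 1, then every complex root of `p` is a root of unity. -/
theorem stmt9 (p : Polynomial ℤ) (hmonic : p.Monic) (h0 : p.eval 0 ≠ 0)
    (hroots : ∀ z : ℂ, Polynomial.aeval z p = 0 → ‖z‖ ≤ 1) :
    ∀ z : ℂ, Polynomial.aeval z p = 0 → ∃ n : ℕ, 0 < n ∧ z ^ n = 1 := by
  intro z hz
  have habs := stmt9_abs_eq_one p hmonic h0 hroots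
  have hzint : IsIntegral ℤ z := ⟨p, hmonic, by rwa [← aeval_def]⟩
  have hzintQ : IsIntegral ℚ z := hzint.tower_top
  let K := IntermediateField.adjoin ℚ ({z} : Set ℂ)
  have : FiniteDimensional ℚ K :=
    IntermediateField.adjoin.finiteDimensional hzintQ
  have : NumberField K := ⟨⟩
  set x : K := IntermediateField.AdjoinSimple.gen ℚ z with hx
  have hxz : (algebraMap K ℂ) x = z := rfl
  have hinj : Function.Injective (algebraMap K ℂ) := (algebraMap K ℂ).injective
  have haevalx : Polynomial.aeval x p = 0 := by
    apply hinj
    rw [map_zero, ← Polynomial.aeval_algebraMap_apply, hxz]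
    exact hz
  have hxint : IsIntegral ℤ x := ⟨p, hmonic, by rw [← aeval_def]; exact haevalx⟩
  have hnorm : ∀ φ : K →+* ℂ, ‖φ x‖ = 1 := by
    intro φ
    have hφroot : Polynomial.aeval (φ x) p = 0 := by
      rw [show φ x = φ.toIntAlgHom x from rfl,
        Polynomial.aeval_algHom_apply φ.toIntAlgHom x p, haevalx, map_zero]
    simpa using habs (φ x) hφroot
  obtain ⟨n, hn, hxn⟩ := NumberField.Embeddings.pow_eq_one_of_norm_eq_one K ℂ hxint hnorm
  refine ⟨n, hn, ?_⟩
  have := congrArg (algebraMap K ℂ) hxn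
  rwa [map_pow, hxz, map_one] at this
end

section
/- If S(x) is a power sum such that S(n) ∈ ℚ for every n ∈ ℕ, then the function f : ℕ → ℚ defined by f(n) = S(n) is a linear recurrence sequence in ℚ. -/
/-!
With `E` the shift `u ↦ u(· + 1)` on sequences, `(E - α)` sends `n ↦ v(n) αⁿ` to
`n ↦ (Δv)(n) αⁿ⁺¹`, so `(E - α)^(deg p + 1)` annihilates `n ↦ p(n) αⁿ` because iterated
forward differences kill polynomials. Hence `q(E)` annihilates the power sum for
`q = ∏ᵢ (minpoly_ℚ αᵢ)^(deg pᵢ + 1)`, which has rational coefficients, is monic, and has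
nonzero constant term as the `αᵢ` are nonzero: its coefficients give the recurrence.
-/

open Polynomial Finset

section seqShift

variable (R : Type*) [CommRing R]

def seqShift : Module.End R (ℕ → R) := LinearMap.funLeft R R (· + 1)

variable {R}

theorem seqShift_pow_apply (j : ℕ) (u : ℕ → R) (n : ℕ) : (seqShift R ^ j) u n = u (n + j) := by
  induction j generalizing u with
  | zero => rfl
  | succ j ih => rw [pow_succ, Module.End.mul_apply, ih]; rfl

theorem aeval_seqShift_apply (Q : R[X]) (u : ℕ → R) (n : ℕ) :
    aeval (seqShift R) Q u n = ∑ j ∈ range (Q.natDegree + 1), Q.coeff j * u (n + j) := by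
  simp [aeval_eq_sum_range, LinearMap.sum_apply, seqShift_pow_apply]

theorem aeval_seqShift_X_sub_C_pow_mul_pow (a : R) (v : ℕ → R) (m : ℕ) :
    aeval (seqShift R) ((X - C a) ^ m) (fun n => v n * a ^ n)
      = fun n => (fwdDiff 1)^[m] v n * a ^ (n + m) := by
  induction m with
  | zero => simp
  | succ m ih =>
    rw [pow_succ', map_mul, Module.End.mul_apply, ih]
    funext n
    simp only [seqShift, aeval_sub, aeval_X, aeval_C, LinearMap.sub_apply,
      Module.algebraMap_end_apply, Pi.sub_apply, LinearMap.funLeft_apply, Pi.smul_apply,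
      smul_eq_mul, Function.iterate_succ_apply', fwdDiff]
    ring

theorem Polynomial.fwdDiff_iter_eval_natCast_eq_zero {P : R[X]} {m : ℕ} (hP : P.natDegree < m) :
    (fwdDiff 1)^[m] (fun n : ℕ => P.eval (n : R)) = 0 := by
  funext y
  have := congrFun (P.fwdDiff_iter_eq_zero_of_degree_lt hP) y
  rw [fwdDiff_iter_eq_sum_shift] at this ⊢
  simpa using this

theorem aeval_seqShift_eq_zero_of_dvd {Q P : R[X]} {a : R}
    (h : (X - C a) ^ (P.natDegree + 1) ∣ Q) :
    aeval (seqShift R) Q (fun n => P.eval (n : R) * a ^ n) = 0 := by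
  obtain ⟨B, rfl⟩ := h
  rw [mul_comm, map_mul, Module.End.mul_apply, aeval_seqShift_X_sub_C_pow_mul_pow,
    P.fwdDiff_iter_eval_natCast_eq_zero (Nat.lt_succ_self _)]
  simp only [Pi.zero_apply, zero_mul]
  exact map_zero _

theorem aeval_seqShift_powerSum_eq_zero {ι : Type*} (s : Finset ι) (p : ι → R[X]) (α : ι → R)
    {Q : R[X]} (h : ∀ i ∈ s, (X - C (α i)) ^ ((p i).natDegree + 1) ∣ Q) :
    aeval (seqShift R) Q (fun n => ∑ i ∈ s, (p i).eval (n : R) * α i ^ n) = 0 := by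
  rw [← Finset.sum_fn, map_sum]
  exact sum_eq_zero fun i hi => aeval_seqShift_eq_zero_of_dvd (h i hi)

end seqShift

theorem Polynomial.Monic.eq_sum_of_sum_coeff_mul_eq_zero {R : Type*} [CommRing R] {q : R[X]}
    (hq : q.Monic) {u : ℕ → R} {n : ℕ}
    (h : ∑ j ∈ range (q.natDegree + 1), q.coeff j * u (n + j) = 0) :
    u (n + q.natDegree) = ∑ j ∈ range q.natDegree, -q.coeff j * u (n + j) := by
  rw [sum_range_succ, hq.coeff_natDegree, one_mul, add_comm, ← eq_neg_iff_add_eq_zero] at h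
  simp only [neg_mul, sum_neg_distrib, h]

theorem minpoly.X_sub_C_pow_dvd_map_pow {K L : Type*} [Field K] [Field L] [Algebra K L]
    (x : L) (m : ℕ) : (X - C x) ^ m ∣ (minpoly K x ^ m).map (algebraMap K L) := by
  rw [Polynomial.map_pow, ← minpoly.eq_X_sub_C']
  exact pow_dvd_pow_of_dvd (minpoly.dvd_map_of_isScalarTower K L x) m

theorem exists_monic_coeff_zero_ne_zero_X_sub_C_pow_dvd {K L ι : Type*} [Field K] [Field L]
    [Algebra K L] [Fintype ι] (α : ι → L) (m : ι → ℕ) (hα0 : ∀ i, α i ≠ 0)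
    (hαalg : ∀ i, IsAlgebraic K (α i)) :
    ∃ q : K[X], q.Monic ∧ q.coeff 0 ≠ 0 ∧
      ∀ i, (X - C (α i)) ^ m i ∣ q.map (algebraMap K L) := by
  have hint i : IsIntegral K (α i) := (hαalg i).isIntegral
  refine ⟨∏ i, minpoly K (α i) ^ m i,
    monic_prod_of_monic _ _ fun i _ => (minpoly.monic (hint i)).pow _, ?_, fun i => ?_⟩
  · rw [coeff_zero_eq_eval_zero, eval_prod, prod_ne_zero_iff]
    intro i _
    rw [eval_pow, ← coeff_zero_eq_eval_zero]
    exact pow_ne_zero _ (minpoly.coeff_zero_ne_zero (hint i) (hα0 i))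
  · exact (minpoly.X_sub_C_pow_dvd_map_pow (α i) (m i)).trans
      (map_dvd (algebraMap K L) (dvd_prod_of_mem (fun i => minpoly K (α i) ^ m i) (mem_univ i)))

theorem stmt12_general (k : ℕ) (p : Fin k → Polynomial ℂ) (α : Fin k → ℂ)
    (hα0 : ∀ i, α i ≠ 0) (hαalg : ∀ i, IsAlgebraic ℚ (α i))
    (g : ℕ → ℚ) (hg : ∀ n ≥ 1, (g n : ℂ) = ∑ i, (p i).eval (n : ℂ) * α i ^ n) :
    ∃ (l : ℕ) (a : ℕ → ℚ), (l = 0 ∨ a 0 ≠ 0) ∧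
      ∀ n ≥ 1, g (n + l) = ∑ i ∈ Finset.range l, a i * g (n + i) := by
  obtain ⟨q, hq, hq0, hdvd⟩ := exists_monic_coeff_zero_ne_zero_X_sub_C_pow_dvd (K := ℚ) α
    (fun i => (p i).natDegree + 1) hα0 hαalg
  have hannih := aeval_seqShift_powerSum_eq_zero univ p α fun i _ => hdvd i
  refine ⟨q.natDegree, fun j => -q.coeff j, Or.inr (neg_ne_zero.mpr hq0),
    fun n hn => hq.eq_sum_of_sum_coeff_mul_eq_zero (Rat.cast_injective (α := ℂ) ?_)⟩
  have hannih_n := congrFun hannih n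
  rw [aeval_seqShift_apply, natDegree_map, Pi.zero_apply] at hannih_n
  push_cast
  rw [← hannih_n]
  refine sum_congr rfl fun j _ => ?_
  rw [coeff_map, eq_ratCast, hg (n + j) (by omega)]

/-- If `S(x) = ∑_{i=1}^k p_i(x) α_i^x` is a power sum such that `S(n) ∈ ℚ` for
every `n ∈ ℕ` (the rational values being given by `g : ℕ → ℚ`), then `n ↦ S(n)` is a linear
recurrence sequence in ℚ. -/
theorem stmt12 (k : ℕ) (p : Fin k → Polynomial ℂ) (α : Fin k → ℂ)
    (hp0 : ∀ i, p i ≠ 0) (hpalg : ∀ i n, IsAlgebraic ℚ ((p i).coeff n))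
    (hα0 : ∀ i, α i ≠ 0) (hαalg : ∀ i, IsAlgebraic ℚ (α i))
    (hαinj : Function.Injective α)
    (g : ℕ → ℚ) (hg : ∀ n ≥ 1, (g n : ℂ) = ∑ i, (p i).eval (n : ℂ) * α i ^ n) :
    ∃ (l : ℕ) (a : ℕ → ℚ), (l = 0 ∨ a 0 ≠ 0) ∧
      ∀ n ≥ 1, g (n + l) = ∑ i ∈ Finset.range l, a i * g (n + i) :=
  stmt12_general k p α hα0 hαalg g hg
end
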